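/- arXiv:2104.08717 — 3 statements merged into one kernel-verified Lean document; each statement's English description precedes it below -/
import Mathlib

section
/- Let K ≥ 1 and let y = (y_1, …, y_K) be a probability vector with y_k > 0 for all k. Let j be an index attaining the maximum of y (i.e., y_k ≤ y_j for all k), and let t = (t_1, …, t_K) be the simplex vertex with t_j = 1 and t_k = 0 for k ≠ j. Then for every probability vector p = (p_1, …, p_K) (p_k ≥ 0, ∑_k p_k = 1), we have ∑_{k=1}^K log(t_k + y_k) ≤ ∑_{k=1}^K log(p_k + y_k). That is, the label-marginal bias term of the logarithmic Dice loss attains its minimum over the probability simplex at the vertex corresponding to the largest ground-truth class proportion. -/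
open Real Finset

lemma log_concave_aux {c q : ℝ} (hc : 0 < c) (hq0 : 0 ≤ q) (hq1 : q ≤ 1) :
    (1 - q) * Real.log c + q * Real.log (c + 1) ≤ Real.log (c + q) := by
  have h := strictConcaveOn_log_Ioi.concaveOn.2 (Set.mem_Ioi.2 hc)
    (Set.mem_Ioi.2 (by linarith : (0:ℝ) < c + 1)) (by linarith : (0:ℝ) ≤ 1 - q) hq0
    (by ring)
  simpa [smul_eq_mul, show (1 - q) * c + q * (c + 1) = c + q by ring] using h

/-- Proposition 1: the label-marginal bias term of the logarithmic Dice loss,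
`p ↦ ∑ k, log (p k + y k)`, attains its minimum over the probability simplex at
the vertex `t` corresponding to the largest ground-truth class proportion. -/
theorem dice_bias_min_at_max_vertex (K : ℕ) (hK : 1 ≤ K) (y : Fin K → ℝ)
    (hy_pos : ∀ k, 0 < y k) (hy_sum : ∑ k, y k = 1)
    (j : Fin K) (hj : ∀ k, y k ≤ y j)
    (t : Fin K → ℝ) (ht : ∀ k, t k = if k = j then 1 else 0)
    (p : Fin K → ℝ) (hp_nonneg : ∀ k, 0 ≤ p k) (hp_sum : ∑ k, p k = 1) :
    ∑ k, Real.log (t k + y k) ≤ ∑ k, Real.log (p k + y k) := by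
  have hp_le1 : ∀ k, p k ≤ 1 := by
    intro k
    have : p k ≤ ∑ i, p i := Finset.single_le_sum (fun i _ => hp_nonneg i) (mem_univ k)
    linarith [hp_sum ▸ this]
  -- step 1: LHS = ∑ log y k + (log (y j + 1) - log (y j))
  have hLHS : ∑ k, Real.log (t k + y k)
      = (∑ k, Real.log (y k)) + (Real.log (y j + 1) - Real.log (y j)) := by
    have : ∑ k, Real.log (t k + y k)
        = ∑ k, (Real.log (y k) + (if k = j then Real.log (y j + 1) - Real.log (y j) else 0)) := by
      apply Finset.sum_congr rfl
      intro k _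
      rw [ht k]
      by_cases h : k = j
      · subst h; simp [add_comm]
      · simp [h]
    rw [this, Finset.sum_add_distrib, Finset.sum_ite_eq' univ j]
    simp
  -- step 2: key inequality for the difference of logs
  have hdiff : ∀ k, Real.log (y j + 1) - Real.log (y j) ≤ Real.log (y k + 1) - Real.log (y k) := by
    intro k
    have hk := hy_pos k
    have hjp := hy_pos j
    have h1 : (y j + 1) * y k ≤ (y k + 1) * y j := by nlinarith [hj k]
    have h2 : Real.log ((y j + 1) * y k) ≤ Real.log ((y k + 1) * y j) :=
      Real.log_le_log (by positivity) h1
    rw [Real.log_mul (by positivity) (ne_of_gt hk),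
        Real.log_mul (by positivity) (ne_of_gt hjp)] at h2
    linarith
  -- chain of inequalities
  calc ∑ k, Real.log (t k + y k)
      = (∑ k, Real.log (y k)) + (Real.log (y j + 1) - Real.log (y j)) := hLHS
    _ = (∑ k, Real.log (y k)) + ∑ k, p k * (Real.log (y j + 1) - Real.log (y j)) := by
        rw [← Finset.sum_mul, hp_sum, one_mul]
    _ ≤ (∑ k, Real.log (y k)) + ∑ k, p k * (Real.log (y k + 1) - Real.log (y k)) := by
        have : ∑ k, p k * (Real.log (y j + 1) - Real.log (y j))
            ≤ ∑ k, p k * (Real.log (y k + 1) - Real.log (y k)) :=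
          Finset.sum_le_sum fun k _ => mul_le_mul_of_nonneg_left (hdiff k) (hp_nonneg k)
        linarith
    _ = ∑ k, ((1 - p k) * Real.log (y k) + p k * Real.log (y k + 1)) := by
        rw [← Finset.sum_add_distrib]
        apply Finset.sum_congr rfl
        intro k _
        ring
    _ ≤ ∑ k, Real.log (y k + p k) := by
        apply Finset.sum_le_sum
        intro k _
        exact log_concave_aux (hy_pos k) (hp_nonneg k) (hp_le1 k)
    _ = ∑ k, Real.log (p k + y k) := by
        apply Finset.sum_congr rfl
        intro k _
        rw [add_comm]
end

section
/- Let Ω be a nonempty finite set (the image domain), Ω_k ⊆ Ω a nonempty subset (the ground-truth region of class k), and p_{ik} ∈ (0, 1] a prediction for each pixel i ∈ Ω. Define the Dice coefficient Dice_k = (2 ∑_{i∈Ω_k} p_{ik}) / (∑_{i∈Ω} p_{ik} + |Ω_k|), the predicted class proportion p̂_k = (1/|Ω|) ∑_{i∈Ω} p_{ik}, and the ground-truth proportion ŷ_k = |Ω_k|/|Ω|. Then the logarithmic Dice loss decomposes exactly as −log(Dice_k) = −log( (1/|Ω_k|) ∑_{i∈Ω_k} p_{ik} ) + log( p̂_k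 + ŷ_k ) + log( |Ω| / (2|Ω_k|) ), i.e., into a ground-truth matching term and a label-marginal bias term, up to an additive constant independent of the predictions. -/
/-- Exact decomposition of the logarithmic Dice loss (Eq. (1) of the paper):
`-log Dice_k` equals a ground-truth matching term plus the label-marginal bias
`log (p̂_k + ŷ_k)`, up to an additive constant independent of the predictions. -/
theorem log_dice_decomposition {ι : Type*} (Ω Ωk : Finset ι)
    (hΩ : Ω.Nonempty) (hΩk : Ωk.Nonempty) (hsub : Ωk ⊆ Ω)
    (p : ι → ℝ) (hp : ∀ i ∈ Ω, 0 < p i ∧ p i ≤ 1) :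
    -Real.log ((2 * ∑ i ∈ Ωk, p i) / ((∑ i ∈ Ω, p i) + (Ωk.card : ℝ)))
      = -Real.log ((1 / (Ωk.card : ℝ)) * ∑ i ∈ Ωk, p i)
        + Real.log ((1 / (Ω.card : ℝ)) * (∑ i ∈ Ω, p i)
            + (Ωk.card : ℝ) / (Ω.card : ℝ))
        + Real.log ((Ω.card : ℝ) / (2 * (Ωk.card : ℝ))) := by
  have hSk : 0 < ∑ i ∈ Ωk, p i :=
    Finset.sum_pos (fun i hi => (hp i (hsub hi)).1) hΩk
  have hS : 0 < ∑ i ∈ Ω, p i := Finset.sum_pos (fun i hi => (hp i hi).1) hΩ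
  have hck : 0 < (Ωk.card : ℝ) := by exact_mod_cast hΩk.card_pos
  have hc : 0 < (Ω.card : ℝ) := by exact_mod_cast hΩ.card_pos
  have e1 : (1 / (Ωk.card : ℝ)) * ∑ i ∈ Ωk, p i
      = (∑ i ∈ Ωk, p i) / (Ωk.card : ℝ) := by ring
  have e2 : (1 / (Ω.card : ℝ)) * (∑ i ∈ Ω, p i) + (Ωk.card : ℝ) / (Ω.card : ℝ)
      = ((∑ i ∈ Ω, p i) + (Ωk.card : ℝ)) / (Ω.card : ℝ) := by ring
  rw [e1, e2,
    Real.log_div (by positivity) (by positivity),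
    Real.log_mul two_ne_zero hSk.ne',
    Real.log_div hSk.ne' hck.ne',
    Real.log_div (by positivity) hc.ne',
    Real.log_div hc.ne' (by positivity),
    Real.log_mul two_ne_zero hck.ne']
  ring
end

section
/- Let K ≥ 1 and let Ω be a nonempty finite set partitioned into nonempty ground-truth regions Ω_1, …, Ω_K (so ∪_k Ω_k = Ω and the Ω_k are pairwise disjoint). Let p_{ik} > 0 for each i ∈ Ω and class k, define p̂_k = (1/|Ω|) ∑_{i∈Ω} p_{ik} and ŷ_k = |Ω_k|/|Ω|. Then the following exact identity holds: −(1/|Ω|) ∑_{k=1}^K ∑_{i∈Ω_k} log(p_{ik}) = [ −(1/|Ω|) ∑_{k=1}^K ∑_{i∈Ω_k} log( p_{ik} / p̂_k ) ] + ∑_{k=1}^K ŷ_k log( ŷ_k / p̂_k ) + [ −∑_{k=1}^K ŷ_k log(ŷ_k) ]. That is, the per-pixel cross-entropy equals the Monte-Carlo conditional-entropy estimate of the features given the labels, plus the KL divergence D_KL(ŷ ‖ p̂) between ground-truth and predicted label-marginals, plus the (prediction-independent) entropy of the ground-truth marginals. -/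
/-- Proposition 2 (exact algebraic form): the per-pixel cross-entropy equals
the Monte-Carlo conditional-entropy estimate of the features given the labels,
plus the label-marginal KL divergence `D_KL(ŷ ‖ p̂)`, plus the
prediction-independent entropy of the ground-truth marginals. -/
theorem ce_decomposition {ι : Type*} [DecidableEq ι] (K : ℕ) (hK : 1 ≤ K)
    (Ω : Finset ι) (hΩ : Ω.Nonempty)
    (R : Fin K → Finset ι) (hR : ∀ k, (R k).Nonempty)
    (hdisj : ∀ k l, k ≠ l → Disjoint (R k) (R l))
    (hcover : Finset.univ.biUnion R = Ω)
    (p : ι → Fin K → ℝ) (hp : ∀ i ∈ Ω, ∀ k, 0 < p i k)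
    (phat yhat : Fin K → ℝ)
    (hphat : ∀ k, phat k = (1 / (Ω.card : ℝ)) * ∑ i ∈ Ω, p i k)
    (hyhat : ∀ k, yhat k = ((R k).card : ℝ) / (Ω.card : ℝ)) :
    -(1 / (Ω.card : ℝ)) * ∑ k, ∑ i ∈ R k, Real.log (p i k)
      = (-(1 / (Ω.card : ℝ)) * ∑ k, ∑ i ∈ R k, Real.log (p i k / phat k))
        + (∑ k, yhat k * Real.log (yhat k / phat k))
        + (-∑ k, yhat k * Real.log (yhat k)) := by
  have hNpos : (0 : ℝ) < (Ω.card : ℝ) := by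
    exact_mod_cast Finset.card_pos.mpr hΩ
  have hsub : ∀ k, R k ⊆ Ω := by
    intro k
    rw [← hcover]
    exact Finset.subset_biUnion_of_mem R (Finset.mem_univ k)
  have hphat_pos : ∀ k, 0 < phat k := by
    intro k
    rw [hphat k]
    exact mul_pos (by positivity) (Finset.sum_pos (fun i hi => hp i hi k) hΩ)
  have hyhat_pos : ∀ k, 0 < yhat k := by
    intro k
    rw [hyhat k]
    exact div_pos (by exact_mod_cast Finset.card_pos.mpr (hR k)) hNpos
  have hlog1 : ∀ k, ∑ i ∈ R k, Real.log (p i k / phat k)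
      = (∑ i ∈ R k, Real.log (p i k)) - ((R k).card : ℝ) * Real.log (phat k) := by
    intro k
    rw [Finset.sum_congr rfl (fun i hi =>
      Real.log_div (ne_of_gt (hp i (hsub k hi) k)) (ne_of_gt (hphat_pos k)))]
    rw [Finset.sum_sub_distrib, Finset.sum_const, nsmul_eq_mul]
  have hlog2 : ∀ k, yhat k * Real.log (yhat k / phat k)
      = yhat k * Real.log (yhat k) - yhat k * Real.log (phat k) := by
    intro k
    rw [Real.log_div (ne_of_gt (hyhat_pos k)) (ne_of_gt (hphat_pos k)), mul_sub]
  have hcard : ∀ k, (1 / (Ω.card : ℝ)) * ((R k).card : ℝ) = yhat k := by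
    intro k
    rw [hyhat k]; field_simp
  simp only [hlog1, hlog2, Finset.sum_sub_distrib, mul_sub, neg_mul, Finset.mul_sum,
    ← mul_assoc]
  have : ∀ k : Fin K, (1 / (Ω.card : ℝ)) * ((R k).card : ℝ) * Real.log (phat k)
      = yhat k * Real.log (phat k) := fun k => by rw [hcard k]
  simp only [this]
  simp [Finset.sum_neg_distrib]
end
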